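/- arXiv:2504.16735 — 6 statements merged into one kernel-verified Lean document; each statement's English description precedes it below -/
import Mathlib

section
/- Behaviour reflection: let f : γ → δ be a pre-cellular morphism with image factorisation f = i_f ∘ e_f through im f, and let δ' be the restriction of δ to im f (well-defined since im f is closed under the action: δ₁(f(x))(m) = f(γ₁(x)(m)) ∈ im f). Then for every section g : im f → X of e_f (i.e., e_f ∘ g = id), we have g* ∘ G_γ ∘ e_f* = G_{δ'}, where (-)* denotes precomposition on configurations. -/
/-- A (possibly non-uniform) cellular automaton over a monoid `M` with
neighbourhood `N ⊆ M` and state set `S`, on a carrier `X` of cells: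
a monoid action (in transposed, Eilenberg-Moore form) together with,
for every cell, a local rule defined on orbit-invariant local configurations. -/
structure CA (M : Type) [Monoid M] (N : Set M) (S : Type) (X : Type) where
  act : X → M → X
  act_one : ∀ x, act x 1 = x
  act_mul : ∀ x (m n : M), act (act x m) n = act x (n * m)
  rule : (x : X) →
    {f : N → S // ∀ m n : N, act x m = act x n → f m = f n} → S

variable {M : Type} [Monoid M] {N : Set M} {S : Type}

/-- The local configuration at cell `x` induced by a global configuration `c`. -/
def localCfg {X : Type} (γ : CA M N S X) (c : X → S) (x : X) :
    {f : N → S // ∀ m n : N, γ.act x m = γ.act x n → f m = f n} :=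
  ⟨fun n => c (γ.act x n), fun _ _ e => congrArg c e⟩

/-- The global rule of a cellular automaton. -/
def G {X : Type} (γ : CA M N S X) (c : X → S) : X → S :=
  fun x => γ.rule x (localCfg γ c x)

/-- `h : X → Y` is a pre-cellular morphism (homomorphism of cellular automata). -/
structure IsHom {X Y : Type} (γ : CA M N S X) (δ : CA M N S Y) (h : X → Y) : Prop where
  hact : ∀ (x : X) (m : M), δ.act (h x) m = h (γ.act x m)
  hrule : ∀ (x : X)
    (f : {f : N → S // ∀ m n : N, δ.act (h x) m = δ.act (h x) n → f m = f n}),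
    δ.rule (h x) f =
      γ.rule x ⟨f.1, fun m n e => f.2 m n
        ((hact x (↑m)).trans ((congrArg h e).trans (hact x (↑n)).symm))⟩

/-- Behaviour reflection: let `f : γ → δ` be a pre-cellular morphism with image
factorisation `f = i_f ∘ e_f` through `im f = Set.range f`, and `δ'` the
restriction of `δ` to `im f` (so the inclusion `i_f` and the corestriction
`e_f` are pre-cellular morphisms). Then for every section `g` of `e_f` we have
`g* ∘ G_γ ∘ e_f* = G_{δ'}`. -/
theorem behaviour_reflection {X Y : Type} (γ : CA M N S X) (δ : CA M N S Y)
    (f : X → Y) (hf : IsHom γ δ f)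
    (δ' : CA M N S (Set.range f))
    (hincl : IsHom δ' δ (Subtype.val : Set.range f → Y))
    (hef : IsHom γ δ' (fun x => ⟨f x, x, rfl⟩))
    (g : Set.range f → X)
    (hg : ∀ y : Set.range f, (⟨f (g y), g y, rfl⟩ : Set.range f) = y) :
    ∀ c : Set.range f → S,
      (G γ (fun x => c ⟨f x, x, rfl⟩)) ∘ g = G δ' c := by
  intro c
  funext y
  have key : ∀ (x : X), G γ (fun x => c ⟨f x, x, rfl⟩) x = G δ' c ⟨f x, x, rfl⟩ := by
    intro x
    show _ = δ'.rule (⟨f x, x, rfl⟩ : Set.range f) (localCfg δ' c ⟨f x, x, rfl⟩)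
    rw [hef.hrule x (localCfg δ' c ⟨f x, x, rfl⟩)]
    unfold G
    congr 1
    apply Subtype.ext
    funext n
    show c ⟨f (γ.act x n), _, rfl⟩ = c (δ'.act ⟨f x, x, rfl⟩ n)
    rw [hef.hact x n]
  show G γ (fun x => c ⟨f x, x, rfl⟩) (g y) = G δ' c y
  rw [key (g y), hg y]
end

section
/- Configuration test formula: let γ be a cellular automaton on X, x ∈ X a cell, and f ∈ I^{γ₁(x)} an orbit-invariant local configuration. Then for every configuration c : X → S, c ∘ γ₁(x) ∘ i = f if and only if (γ, x, c) ⊨ ⋀_{n ∈ N} ⟨n⟩ f(n). -/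
variable {M : Type} [Monoid M] {N : Set M} {S : Type}

/-- Modal formulas over state set `S` and monoid `M`: state atoms, negation,
infinitary disjunction, spatial modalities `⟨m⟩` and the update modality `○`. -/
inductive Formula (S M : Type) : Type 1 where
  | atom : S → Formula S M
  | neg : Formula S M → Formula S M
  | disj : {I : Type} → (I → Formula S M) → Formula S M
  | dia : M → Formula S M → Formula S M
  | next : Formula S M → Formula S M

/-- The modal forcing relation `(γ, x, c) ⊨ φ`. -/
def Sat {X : Type} (γ : CA M N S X) : Formula S M → X → (X → S) → Prop
  | .atom s, x, c => c x = s
  | .neg φ, x, c => ¬ Sat γ φ x c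
  | .disj φs, x, c => ∃ i, Sat γ (φs i) x c
  | .dia m φ, x, c => Sat γ φ (γ.act x m) c
  | .next φ, x, c => Sat γ φ x (G γ c)

/-- Infinitary conjunction, defined as `¬ ⋁ ¬`. -/
def Conj {S M : Type} {I : Type} (φ : I → Formula S M) : Formula S M :=
  .neg (.disj fun i => .neg (φ i))

/-- Configuration test formula: for a cell `x` and an orbit-invariant local
configuration `f ∈ I^{γ₁(x)}`, a configuration `c` restricts to `f` on the
neighbourhood of `x` iff `(γ, x, c) ⊨ ⋀_{n ∈ N} ⟨n⟩ f(n)`. -/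
theorem configuration_test_formula {X : Type} (γ : CA M N S X) (x : X)
    (f : {f : N → S // ∀ m n : N, γ.act x m = γ.act x n → f m = f n})
    (c : X → S) :
    ((fun n : N => c (γ.act x ↑n)) = f.1) ↔
      Sat γ (Conj fun n : N => .dia (↑n) (.atom (f.1 n))) x c := by
  constructor
  · intro h
    simp only [Sat, Conj]
    rintro ⟨n, hn⟩
    exact hn (congrFun h n)
  · intro h
    funext n
    by_contra hn
    exact h ⟨n, hn⟩
end

section
/- Local rule test formula: let γ be a cellular automaton, x a cell, f ∈ I^{γ₁(x)}, and c a configuration with c ∘ γ₁(x) ∘ i = f. Then for every state s, γ₂(x)(f) = s if and only if (γ, x, c) ⊨ (⋀_{n∈N} ⟨n⟩ f(n)) → ○ s. -/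
variable {M : Type} [Monoid M] {N : Set M} {S : Type}

/-- Implication `ψ → φ`, defined as `¬ψ ∨ φ`. -/
def Impl {S M : Type} (ψ φ : Formula S M) : Formula S M :=
  .disj fun b : Bool => cond b (.neg ψ) φ

/-- Local rule test formula: for a cell `x`, `f ∈ I^{γ₁(x)}`, and a
configuration `c` restricting to `f` on the neighbourhood of `x`,
`γ₂(x)(f) = s` iff `(γ, x, c) ⊨ (⋀_{n∈N} ⟨n⟩ f(n)) → ○ s`. -/
theorem local_rule_test_formula {X : Type} (γ : CA M N S X) (x : X)
    (f : {f : N → S // ∀ m n : N, γ.act x m = γ.act x n → f m = f n})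
    (c : X → S)
    (hc : (fun n : N => c (γ.act x ↑n)) = f.1) (s : S) :
    γ.rule x f = s ↔
      Sat γ (Impl (Conj fun n : N => .dia (↑n) (.atom (f.1 n)))
        (.next (.atom s))) x c := by
  have hloc : localCfg γ c x = f := Subtype.ext hc
  have hG : G γ c x = γ.rule x f := by rw [G, hloc]
  constructor
  · intro h
    exact ⟨false, hG.trans h⟩
  · rintro ⟨b, hb⟩
    cases b with
    | false => exact hG.symm.trans hb
    | true =>
      exact absurd (fun ⟨n, hn⟩ => hn (congrFun hc n)) hb
end

section
/- Cellular bisimulation implies logical equivalence: if (ρ, q, R, p, g) is a cellular bisimulation between cellular automata γ and δ, then for all u ∈ |ρ|, all c ∈ R, and all modal formulas φ: (γ, q₁(u), p₁(c)) ⊨ φ if and only if (δ, q₂(u), p₂(c)) ⊨ φ. -/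
variable {M : Type} [Monoid M] {N : Set M} {S : Type}

/-- Cellular bisimulation implies logical equivalence: for a cellular
bisimulation `(ρ, q₁, q₂, R, p₁, p₂, g)` between `γ` and `δ`, related cells
satisfy the same formulas under related configurations. -/
theorem bisimulation_to_logical_equivalence {X Y Z : Type}
    (γ : CA M N S X) (δ : CA M N S Y) (ρ : CA M N S Z)
    (q1 : Z → X) (q2 : Z → Y) (hq1 : IsHom ρ γ q1) (hq2 : IsHom ρ δ q2)
    (R : Type) (p1 : R → X → S) (p2 : R → Y → S) (g : R → R)
    (hcomp : ∀ r, p1 r ∘ q1 = p2 r ∘ q2)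
    (hg1 : ∀ r, p1 (g r) = G γ (p1 r))
    (hg2 : ∀ r, p2 (g r) = G δ (p2 r)) :
    ∀ (u : Z) (r : R) (φ : Formula S M),
      Sat γ φ (q1 u) (p1 r) ↔ Sat δ φ (q2 u) (p2 r) := by
  intro u r φ
  induction φ generalizing u r with
  | atom s =>
      simp only [Sat]
      rw [show p1 r (q1 u) = p2 r (q2 u) from congrFun (hcomp r) u]
  | neg φ ih => simp only [Sat]; exact not_congr (ih u r)
  | disj φs ih => exact exists_congr fun i => ih i u r
  | dia m φ ih =>
      simp only [Sat]
      rw [hq1.hact, hq2.hact]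
      exact ih (ρ.act u m) r
  | next φ ih =>
      simp only [Sat]
      rw [← hg1 r, ← hg2 r]
      exact ih u (g r)
end

section
/- Hennessy-Milner for transports: let t : (γ, x₀) ⇝ (δ, y₀) be a logical transport between based reachable cellular automata, where the action γ₁ is free (each γ₁(x) : M → X is injective) and both automata are reachable (γ₁(x₀) and δ₁(y₀) are surjective). Then the map f_t : X → Y defined by f_t(γ₁(x₀)(m)) = δ₁(y₀)(m) is a well-defined equivariant map with f_t(x₀) = y₀, and t is a two-sided inverse of the precomposition map f_t* : (Y→S) → (X→S) (in particular, t is a section of f_t*). -/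
variable {M : Type} [Monoid M] {N : Set M} {S : Type}

/-- A logical transport `t : (γ, x₀) ⇝ (δ, y₀)`: a map on configurations that
preserves and reflects the truth of all modal formulas at the base cells. -/
def LogTrans {X Y : Type} (γ : CA M N S X) (x₀ : X) (δ : CA M N S Y) (y₀ : Y)
    (t : (X → S) → (Y → S)) : Prop :=
  ∀ (φ : Formula S M) (c : X → S), Sat γ φ x₀ c ↔ Sat δ φ y₀ (t c)

/-- Hennessy-Milner for transports: a logical transport `t : (γ,x₀) ⇝ (δ,y₀)`
between based reachable cellular automata with `γ₁` free induces a well-defined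
equivariant base-point-preserving map `f_t` with `f_t(γ₁(x₀)(m)) = δ₁(y₀)(m)`,
and `t` is a two-sided inverse of the precomposition map `f_t*`. -/
theorem hennessy_milner_transport {X Y : Type}
    (γ : CA M N S X) (x₀ : X) (δ : CA M N S Y) (y₀ : Y)
    (hfree : ∀ x, Function.Injective (γ.act x))
    (hreachγ : Function.Surjective (γ.act x₀))
    (hreachδ : Function.Surjective (δ.act y₀))
    (t : (X → S) → (Y → S)) (ht : LogTrans γ x₀ δ y₀ t) :
    ∃ f : X → Y,
      (∀ m : M, f (γ.act x₀ m) = δ.act y₀ m) ∧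
      (∀ (x : X) (m : M), f (γ.act x m) = δ.act (f x) m) ∧
      f x₀ = y₀ ∧
      (∀ c : X → S, t c ∘ f = c) ∧
      (∀ c : Y → S, t (c ∘ f) = c) := by
  classical
  have key : ∀ (c : X → S) (m : M), t c (δ.act y₀ m) = c (γ.act x₀ m) := by
    intro c m
    exact (ht (Formula.dia m (Formula.atom (c (γ.act x₀ m)))) c).mp rfl
  set f : X → Y := fun x => δ.act y₀ (Classical.choose (hreachγ x)) with hfdef
  have hf : ∀ m : M, f (γ.act x₀ m) = δ.act y₀ m := by
    intro m
    have h := Classical.choose_spec (hreachγ (γ.act x₀ m))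
    have : Classical.choose (hreachγ (γ.act x₀ m)) = m := hfree x₀ h
    simp only [hfdef, this]
  refine ⟨f, hf, ?_, ?_, ?_, ?_⟩
  · intro x m
    obtain ⟨n, rfl⟩ := hreachγ x
    rw [γ.act_mul, hf, hf, δ.act_mul]
  · have := hf 1
    rwa [γ.act_one, δ.act_one] at this
  · intro c
    funext x
    obtain ⟨m, rfl⟩ := hreachγ x
    simp only [Function.comp, hf, key]
  · intro c
    funext y
    obtain ⟨m, rfl⟩ := hreachδ y
    have := key (c ∘ f) m
    rw [this]
    simp only [Function.comp, hf]
end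

section
/- In the setting of a logical equivalence (R, p₁, p₂) between based cellular automata (γ, x₀) and (δ, y₀) with a section s₂ of p₂, define the common orbit O = {(γ₁(x₀)(m), δ₁(y₀)(m)) : m ∈ M} and Q = {(x, y) ∈ O : for all formulas φ and all c ∈ R, (γ, x, p₁(c)) ⊨ φ ↔ (δ, y, p₂(c)) ⊨ φ}. Then (x₀, y₀) ∈ Q, and Q is closed under the diagonal action: for all (x, y) ∈ Q and m ∈ M, (γ₁(x)(m), δ₁(y)(m)) ∈ Q. -/
variable {M : Type} [Monoid M] {N : Set M} {S : Type}

/-- Given a logical equivalence `(R, p₁, p₂)` between based cellular automata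
with a section `s₂` of `p₂`, the relation `Q` of logically equivalent cells on
the common orbit `O` of the base points contains `(x₀, y₀)` and is closed under
the diagonal action. -/
theorem logical_equivalence_orbit_closed {X Y R : Type}
    (γ : CA M N S X) (x₀ : X) (δ : CA M N S Y) (y₀ : Y)
    (p1 : R → X → S) (p2 : R → Y → S)
    (hle : ∀ (c : R) (φ : Formula S M), Sat γ φ x₀ (p1 c) ↔ Sat δ φ y₀ (p2 c))
    (s2 : (Y → S) → R) (hs2 : ∀ c, p2 (s2 c) = c) :
    let O : Set (X × Y) := {p | ∃ m : M, p = (γ.act x₀ m, δ.act y₀ m)}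
    let Q : Set (X × Y) := {p | p ∈ O ∧ ∀ (φ : Formula S M) (c : R),
        Sat γ φ p.1 (p1 c) ↔ Sat δ φ p.2 (p2 c)}
    (x₀, y₀) ∈ Q ∧ ∀ p ∈ Q, ∀ m : M, (γ.act p.1 m, δ.act p.2 m) ∈ Q := by
  intro O Q
  constructor
  · exact ⟨⟨1, by rw [γ.act_one, δ.act_one]⟩, fun φ c => hle c φ⟩
  · rintro ⟨x, y⟩ ⟨⟨m, hm⟩, hq⟩ m'
    simp only [Prod.mk.injEq] at hm
    refine ⟨⟨m' * m, by rw [← γ.act_mul, ← δ.act_mul, hm.1, hm.2]⟩, fun φ c => ?_⟩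
    exact hq (.dia m' φ) c
end
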